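/- Suppose F₋ > 2F₊ > 0. If w lies in the interior of region A₂ = {w : w₁ > 0, w₁ > -w₂}, then the subdifferential of D_sh at w is the singleton {α₂} where α₂ = (2F₊, F₊); i.e., D_sh is differentiable there with gradient α₂. -/

import Mathlib

/-!
For `F₋ ≥ 2F₊ ≥ 0` the cost satisfies `d x ≥ F₊ x` and `d x ≥ -2F₊ x`, so
`D(w, v) ≥ -2F₊(v - w₁) + F₊ v + F₊(v + w₂) = ⟨α₂, w⟩` for every `v`; on `A₂` the choice `v = w₁`
attains this bound. Thus `D_sh` is minorized by the linear form `⟨α₂, ·⟩` everywhere and agrees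
with it on the open set `A₂`, and a linear form that is a subgradient of a linear form on a
neighbourhood of `w` must be that form.
-/

open Filter Topology

noncomputable def d (Fp Fm x : ℝ) : ℝ := Fp * max x 0 - Fm * min x 0

noncomputable def D (Fp Fm : ℝ) (w : ℝ × ℝ) (v : ℝ) : ℝ :=
  d Fp Fm (v - w.1) + d Fp Fm v + d Fp Fm (v + w.2)

noncomputable def Dsh (Fp Fm : ℝ) (w : ℝ × ℝ) : ℝ := ⨅ v : ℝ, D Fp Fm w v

/-- Standard inner product on ℝ². -/
def dot (x y : ℝ × ℝ) : ℝ := x.1 * y.1 + x.2 * y.2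

section LinearForms

variable {E : Type*} [AddCommGroup E] [Module ℝ E] [TopologicalSpace E]

theorem LinearMap.eq_zero_of_eventually_nonpos [ContinuousSMul ℝ E] {ψ : E →ₗ[ℝ] ℝ}
    (hψ : ∀ᶠ h in 𝓝 0, ψ h ≤ 0) : ψ = 0 := by
  have nonpos : ∀ x, ψ x ≤ 0 := by
    intro x
    have hline : Tendsto (fun t : ℝ => t • x) (𝓝[>] 0) (𝓝 0) := by
      simpa using (tendsto_id.smul_const x).mono_left (nhdsWithin_le_nhds (a := (0 : ℝ)))
    obtain ⟨t, htx, ht⟩ := ((hline.eventually hψ).and self_mem_nhdsWithin).exists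
    rw [map_smul, smul_eq_mul] at htx
    exact nonpos_of_mul_nonpos_right htx (Set.mem_Ioi.mp ht)
  ext x
  exact le_antisymm (nonpos x) (by simpa using nonpos (-x))

theorem subgradient_iff_of_linear_minorant [ContinuousAdd E] [ContinuousSMul ℝ E]
    {f : E → ℝ} {φ : E →ₗ[ℝ] ℝ} {w : E} (hle : ∀ x, φ x ≤ f x) (heq : f =ᶠ[𝓝 w] φ)
    (g : E →ₗ[ℝ] ℝ) : (∀ w', f w + g (w' - w) ≤ f w') ↔ g = φ := by
  have hw : f w = φ w := heq.self_of_nhds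
  constructor
  · intro hsub
    have hshift : Tendsto (fun h => w + h) (𝓝 0) (𝓝 w) := by
      simpa using (continuous_const_add w).tendsto (0 : E)
    refine sub_eq_zero.mp (LinearMap.eq_zero_of_eventually_nonpos ?_)
    filter_upwards [hshift.eventually heq] with h hh
    have := hsub (w + h)
    rw [hw, hh, add_sub_cancel_left, map_add] at this
    simpa using this
  · rintro rfl w'
    simpa [hw] using hle w'

end LinearForms

def dotLeft (ξ : ℝ × ℝ) : ℝ × ℝ →ₗ[ℝ] ℝ :=
  ξ.1 • LinearMap.fst ℝ ℝ ℝ + ξ.2 • LinearMap.snd ℝ ℝ ℝ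

@[simp]
theorem dotLeft_apply (ξ x : ℝ × ℝ) : dotLeft ξ x = dot ξ x := by
  simp [dotLeft, dot]

theorem dotLeft_injective : Function.Injective dotLeft := by
  intro ξ η h
  have h1 := LinearMap.congr_fun h (1, 0)
  have h2 := LinearMap.congr_fun h (0, 1)
  simp only [dotLeft_apply, dot, mul_one, mul_zero, add_zero, zero_add] at h1 h2
  exact Prod.ext h1 h2

section Cost

variable {Fp Fm : ℝ}

theorem d_of_nonneg {x : ℝ} (hx : 0 ≤ x) : d Fp Fm x = Fp * x := by
  simp [d, max_eq_left hx, min_eq_right hx]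

theorem mul_le_d (hp : 0 ≤ Fp) (hm : 2 * Fp ≤ Fm) (x : ℝ) : Fp * x ≤ d Fp Fm x := by
  rcases le_total 0 x with hx | hx
  · exact (d_of_nonneg hx).ge
  · simp only [d, max_eq_right hx, min_eq_left hx]
    nlinarith

theorem neg_two_mul_le_d (hp : 0 ≤ Fp) (hm : 2 * Fp ≤ Fm) (x : ℝ) :
    -(2 * Fp) * x ≤ d Fp Fm x := by
  rcases le_total 0 x with hx | hx
  · rw [d_of_nonneg hx]
    nlinarith
  · simp only [d, max_eq_right hx, min_eq_left hx]
    nlinarith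

theorem dot_le_D (hp : 0 ≤ Fp) (hm : 2 * Fp ≤ Fm) (w : ℝ × ℝ) (v : ℝ) :
    dot (2 * Fp, Fp) w ≤ D Fp Fm w v := by
  have h1 := neg_two_mul_le_d hp hm (v - w.1)
  have h2 := mul_le_d hp hm v
  have h3 := mul_le_d hp hm (v + w.2)
  simp only [dot, D]
  linarith

theorem dot_le_Dsh (hp : 0 ≤ Fp) (hm : 2 * Fp ≤ Fm) (w : ℝ × ℝ) :
    dot (2 * Fp, Fp) w ≤ Dsh Fp Fm w :=
  le_ciInf (dot_le_D hp hm w)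

theorem Dsh_eq_dot (hp : 0 ≤ Fp) (hm : 2 * Fp ≤ Fm) {w : ℝ × ℝ} (hw₁ : 0 ≤ w.1)
    (hw₁₂ : 0 ≤ w.1 + w.2) : Dsh Fp Fm w = dot (2 * Fp, Fp) w := by
  refine le_antisymm ?_ (dot_le_Dsh hp hm w)
  have hattained : D Fp Fm w w.1 = dot (2 * Fp, Fp) w := by
    rw [D, sub_self, d_of_nonneg le_rfl, d_of_nonneg hw₁, d_of_nonneg hw₁₂, dot]
    ring
  exact hattained ▸ ciInf_le ⟨_, Set.forall_mem_range.mpr (dot_le_D hp hm w)⟩ w.1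

end Cost

theorem subdiff_interior_A2 (Fp Fm : ℝ) (hp : 0 < Fp) (hm : 2 * Fp < Fm)
    (w : ℝ × ℝ) (h1 : 0 < w.1) (h2 : -w.2 < w.1) :
    ∀ ξ : ℝ × ℝ,
      (∀ w' : ℝ × ℝ, Dsh Fp Fm w + dot ξ (w' - w) ≤ Dsh Fp Fm w') ↔
        ξ = (2 * Fp, Fp) := by
  intro ξ
  have hA₂ : ∀ᶠ w' in 𝓝 w, 0 < w'.1 ∧ 0 < w'.1 + w'.2 :=
    ((continuous_fst.tendsto w).eventually (lt_mem_nhds h1)).and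
      (((continuous_fst.add continuous_snd).tendsto w).eventually
        (lt_mem_nhds (neg_lt_iff_pos_add.mp h2)))
  have heq : Dsh Fp Fm =ᶠ[𝓝 w] dotLeft (2 * Fp, Fp) := by
    filter_upwards [hA₂] with w' hw'
    rw [dotLeft_apply, Dsh_eq_dot hp.le hm.le hw'.1.le hw'.2.le]
  have hle : ∀ w', dotLeft (2 * Fp, Fp) w' ≤ Dsh Fp Fm w' := fun w' => by
    simpa using dot_le_Dsh hp.le hm.le w'
  simpa [dotLeft_injective.eq_iff] using subgradient_iff_of_linear_minorant hle heq (dotLeft ξ)
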